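/- arXiv:1901.00387 — 2 statements merged into one kernel-verified Lean document; each statement's English description precedes it below -/
import Mathlib

section
/- If m ≥ t and t ≤ min{w, L−w}, then the map φ from P(m,L;w,t) to the set of pairs of partitions (λ₁,λ₂) with total weight at most t is a bijection. -/
/-! An antitone tuple is determined by the multiset of its entries, and a multiset `M` of naturals
is determined by its size together with its parts above `w` (shifted down by `w`) and below `w`
(reflected through `w`): all other entries equal `w`. Conversely, a pair `(λ₁, λ₂)` of total
weight at most `t ≤ m` comes from the multiset made of `w + λ₁`, `w - λ₂` and `m - |λ₁| - |λ₂|`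
copies of `w`, sorted decreasingly; since every part is at most `t ≤ min(w, L - w)`, its entries
lie in `[0, L]` and no subtraction truncates. -/

open Finset

/-- `P(m,L;w,t)`: non-increasing `m`-tuples with entries in `[0,L]` whose
ℓ₁-deviation from the constant tuple `(w,…,w)` is at most `t`. -/
def Pset (m L w t : ℕ) : Finset (Fin m → Fin (L + 1)) :=
  Finset.univ.filter (fun u =>
    (∀ i j : Fin m, i ≤ j → (u j : ℕ) ≤ (u i : ℕ)) ∧
    ∑ i, ((u i : ℤ) - (w : ℤ)).natAbs ≤ t)

/-- The map `φ` sending `u` to the pair of partitions (given as multisets)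
formed by the positive entries of `u - (w,…,w)` and the absolute values of
its negative entries. -/
def phi {m L : ℕ} (w : ℕ) (u : Fin m → Fin (L + 1)) : Multiset ℕ × Multiset ℕ :=
  ((((Finset.univ : Finset (Fin m)).val.map (fun i => ((u i : ℤ) - (w : ℤ)).toNat)).filter
      (fun x => 0 < x)),
   (((Finset.univ : Finset (Fin m)).val.map (fun i => ((w : ℤ) - (u i : ℤ)).toNat)).filter
      (fun x => 0 < x)))

namespace Multiset

def partsAbove (w : ℕ) (M : Multiset ℕ) : Multiset ℕ := (M.map (· - w)).filter (0 < ·)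

def partsBelow (w : ℕ) (M : Multiset ℕ) : Multiset ℕ := (M.map (w - ·)).filter (0 < ·)

def fromParts (w n : ℕ) (l₁ l₂ : Multiset ℕ) : Multiset ℕ :=
  l₁.map (w + ·) + l₂.map (w - ·) + replicate (n - card l₁ - card l₂) w

variable {w n : ℕ} {M l₁ l₂ : Multiset ℕ}

theorem pos_of_mem_partsAbove {x : ℕ} (hx : x ∈ partsAbove w M) : 0 < x :=
  (mem_filter.mp hx).2

theorem pos_of_mem_partsBelow {x : ℕ} (hx : x ∈ partsBelow w M) : 0 < x :=
  (mem_filter.mp hx).2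

theorem partsAbove_cons (a : ℕ) :
    partsAbove w (a ::ₘ M) = if w < a then (a - w) ::ₘ partsAbove w M else partsAbove w M := by
  simp only [partsAbove, map_cons, filter_cons, Nat.sub_pos_iff_lt]
  split_ifs <;> simp

theorem partsBelow_cons (a : ℕ) :
    partsBelow w (a ::ₘ M) = if a < w then (w - a) ::ₘ partsBelow w M else partsBelow w M := by
  simp only [partsBelow, map_cons, filter_cons, Nat.sub_pos_iff_lt]
  split_ifs <;> simp

theorem card_partsAbove_add_card_partsBelow_le :
    card (partsAbove w M) + card (partsBelow w M) ≤ card M := by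
  induction M using Multiset.induction_on with
  | empty => simp [partsAbove, partsBelow]
  | cons a M ih =>
    rw [partsAbove_cons, partsBelow_cons]
    split_ifs <;> simp only [card_cons] <;> omega

theorem sum_partsAbove_add_sum_partsBelow :
    (partsAbove w M).sum + (partsBelow w M).sum =
      (M.map fun x : ℕ => ((x : ℤ) - w).natAbs).sum := by
  induction M using Multiset.induction_on with
  | empty => simp [partsAbove, partsBelow]
  | cons a M ih =>
    rw [partsAbove_cons, partsBelow_cons, map_cons, sum_cons]
    simp only [apply_ite Multiset.sum, sum_cons]
    split_ifs <;> omega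

theorem fromParts_partsAbove_partsBelow :
    fromParts w (card M) (partsAbove w M) (partsBelow w M) = M := by
  induction M using Multiset.induction_on with
  | empty => simp [fromParts, partsAbove, partsBelow]
  | cons a M ih =>
    have hcard := card_partsAbove_add_card_partsBelow_le (w := w) (M := M)
    rw [partsAbove_cons, partsBelow_cons]
    conv_rhs => rw [← ih]
    split_ifs with h₁ h₂ h₂
    · omega
    · simp only [fromParts, card_cons, map_cons, cons_add]
      congr 1 <;> [omega; (congr 2; omega)]
    · simp only [fromParts, card_cons, map_cons, cons_add, add_cons]
      congr 1 <;> [omega; (congr 2; omega)]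
    · obtain rfl : a = w := by omega
      simp only [fromParts, card_cons, Nat.sub_sub]
      rw [Nat.succ_sub hcard, replicate_succ, add_cons]

theorem card_fromParts (h : card l₁ + card l₂ ≤ n) : card (fromParts w n l₁ l₂) = n := by
  simp only [fromParts, card_add, card_map, card_replicate]
  omega

theorem filter_pos_replicate_zero (k : ℕ) : (replicate k 0).filter (0 < ·) = 0 :=
  filter_eq_nil.mpr fun _ ha => (eq_of_mem_replicate ha).le.not_gt

theorem partsAbove_fromParts (h₁ : ∀ x ∈ l₁, 0 < x) :
    partsAbove w (fromParts w n l₁ l₂) = l₁ := by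
  simp [partsAbove, fromParts, filter_add, filter_pos_replicate_zero, filter_eq_self.mpr h₁]

theorem partsBelow_fromParts (h₂ : ∀ y ∈ l₂, 0 < y ∧ y ≤ w) :
    partsBelow w (fromParts w n l₁ l₂) = l₂ := by
  have hl₂ : l₂.map (fun y => w - (w - y)) = l₂ :=
    (map_congr rfl fun y hy => Nat.sub_sub_self (h₂ y hy).2).trans (map_id l₂)
  simp [partsBelow, fromParts, filter_add, filter_pos_replicate_zero, hl₂,
    filter_eq_self.mpr fun y hy => (h₂ y hy).1]

theorem le_of_mem_fromParts {L : ℕ} (hw : w ≤ L) (h₁ : ∀ x ∈ l₁, x ≤ L - w) :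
    ∀ x ∈ fromParts w n l₁ l₂, x ≤ L := by
  simp only [fromParts, mem_add, mem_map, mem_replicate]
  rintro x ((⟨y, hy, rfl⟩ | ⟨y, -, rfl⟩) | ⟨-, rfl⟩)
  · have := h₁ y hy
    omega
  · omega
  · exact hw

theorem card_le_sum_of_pos (h : ∀ x ∈ M, 0 < x) : card M ≤ M.sum := by
  simpa using card_nsmul_le_sum h

end Multiset

open Multiset

theorem phi_eq_parts {m L : ℕ} (w : ℕ) (u : Fin m → Fin (L + 1)) :
    phi w u = (partsAbove w (univ.val.map fun i => (u i : ℕ)),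
      partsBelow w (univ.val.map fun i => (u i : ℕ))) := by
  simp only [phi, partsAbove, partsBelow, Multiset.map_map, Function.comp_def]
  congr 3 <;> funext i <;> omega

theorem sum_phi_fst_add_sum_phi_snd {m L : ℕ} (w : ℕ) (u : Fin m → Fin (L + 1)) :
    (phi w u).1.sum + (phi w u).2.sum = ∑ i, ((u i : ℤ) - w).natAbs := by
  rw [phi_eq_parts, sum_partsAbove_add_sum_partsBelow, Multiset.map_map]
  rfl

theorem fromParts_phi {m L : ℕ} (w : ℕ) (u : Fin m → Fin (L + 1)) :
    fromParts w m (phi w u).1 (phi w u).2 = univ.val.map fun i => (u i : ℕ) := by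
  rw [phi_eq_parts]
  convert fromParts_partsAbove_partsBelow
  simp

theorem Antitone.eq_of_map_univ_eq {α : Type*} [LinearOrder α] {m : ℕ} {u v : Fin m → α}
    (hu : Antitone u) (hv : Antitone v) (h : univ.val.map u = univ.val.map v) : u = v := by
  rw [Fin.univ_val_map, Fin.univ_val_map, Multiset.coe_eq_coe] at h
  exact List.ofFn_injective (h.eq_of_sortedGE hu.sortedGE_ofFn hv.sortedGE_ofFn)

theorem Multiset.exists_antitone_map_univ_eq {α : Type*} [LinearOrder α] (M : Multiset α)
    {m : ℕ} (hM : card M = m) : ∃ u : Fin m → α, Antitone u ∧ univ.val.map u = M := by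
  obtain ⟨l, hl, rfl⟩ : ∃ l : List α, l.SortedGE ∧ (l : Multiset α) = M :=
    ⟨M.sort (· ≥ ·), (pairwise_sort _ _).sortedGE, sort_eq _ _⟩
  rw [coe_card] at hM
  subst hM
  exact ⟨l.get, hl.antitone_get, by rw [Fin.univ_val_map, List.ofFn_get]⟩

def boundedPartitionPairs (t : ℕ) : Set (Multiset ℕ × Multiset ℕ) :=
  {p | (∀ x ∈ p.1, 0 < x) ∧ (∀ x ∈ p.2, 0 < x) ∧ p.1.sum + p.2.sum ≤ t}

section Bijection

variable {m L w t : ℕ}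

theorem mem_Pset {u : Fin m → Fin (L + 1)} :
    u ∈ Pset m L w t ↔ Antitone (fun i => (u i : ℕ)) ∧ ∑ i, ((u i : ℤ) - w).natAbs ≤ t := by
  simp only [Pset, Finset.mem_filter, Finset.mem_univ, true_and]
  rfl

theorem phi_mapsTo : Set.MapsTo (phi w) (Pset m L w t : Set (Fin m → Fin (L + 1)))
    (boundedPartitionPairs t) := by
  intro u hu
  refine ⟨fun x hx => ?_, fun x hx => ?_,
    (sum_phi_fst_add_sum_phi_snd w u).trans_le (mem_Pset.mp hu).2⟩ <;>
    simp only [phi_eq_parts] at hx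
  exacts [pos_of_mem_partsAbove hx, pos_of_mem_partsBelow hx]

theorem phi_injOn :
    Set.InjOn (phi w) {u : Fin m → Fin (L + 1) | Antitone fun i => (u i : ℕ)} := by
  intro u hu v hv huv
  have hval := congr_arg (fun p => fromParts w m p.1 p.2) huv
  simp only [fromParts_phi] at hval
  funext i
  exact Fin.ext (congrFun (Antitone.eq_of_map_univ_eq hu hv hval) i)

theorem phi_surjOn (hw : w ≤ L) (hm : t ≤ m) (htw : t ≤ w) (htLw : t ≤ L - w) :
    Set.SurjOn (phi w) (Pset m L w t : Set (Fin m → Fin (L + 1)))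
      (boundedPartitionPairs t) := by
  rintro p ⟨h₁, h₂, hsum⟩
  have hcard : card (fromParts w m p.1 p.2) = m := by
    have := card_le_sum_of_pos h₁
    have := card_le_sum_of_pos h₂
    exact card_fromParts (by omega)
  have hle : ∀ x ∈ fromParts w m p.1 p.2, x ≤ L :=
    le_of_mem_fromParts hw fun x hx => (le_sum_of_mem hx).trans (by omega)
  obtain ⟨v, hv, hvM⟩ := exists_antitone_map_univ_eq _ hcard
  let u : Fin m → Fin (L + 1) := fun i =>
    ⟨v i, Nat.lt_succ_of_le (hle _ (hvM ▸ mem_map_of_mem _ (mem_univ_val i)))⟩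
  have hphi : phi w u = p := by
    rw [phi_eq_parts]
    change (partsAbove w (univ.val.map v), partsBelow w (univ.val.map v)) = p
    rw [hvM, partsAbove_fromParts h₁, partsBelow_fromParts fun y hy =>
      ⟨h₂ y hy, (le_sum_of_mem hy).trans (by omega)⟩]
  refine ⟨u, mem_Pset.mpr ⟨hv, ?_⟩, hphi⟩
  rw [← sum_phi_fst_add_sum_phi_snd, hphi]
  exact hsum

end Bijection

/-- Lemma 12 (bijectivity): if `m ≥ t` and `t ≤ min{w, L-w}`, then `φ` is a
bijection from `P(m,L;w,t)` onto the set of pairs of partitions with total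
weight at most `t`. -/
theorem stmt_5 (m L w t : ℕ) (hw : w ≤ L) (hm : t ≤ m)
    (htw : t ≤ w) (htLw : t ≤ L - w) :
    Set.BijOn (phi w)
      ((Pset m L w t : Finset (Fin m → Fin (L + 1))) : Set (Fin m → Fin (L + 1)))
      {p : Multiset ℕ × Multiset ℕ |
        (∀ x ∈ p.1, 0 < x) ∧ (∀ x ∈ p.2, 0 < x) ∧ p.1.sum + p.2.sum ≤ t} :=
  ⟨phi_mapsTo, phi_injOn.mono fun _ hu => (mem_Pset.mp hu).1, phi_surjOn hw hm htw htLw⟩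
end

section
/- Let C(m,L,w) be the constant subblock-composition space with 2 ≤ w ≤ L−2. Any code C ⊆ C(m,L,w) with minimum Hamming distance at least 6 satisfies: |C| ≤ C(L,w−1)²·C(L,w)^{m−2}/w² if w ≤ (L+2)/(m+1); |C| ≤ C(L,w+1)²·C(L,w)^{m−2}/(L−w)² if w ≥ (mL−2)/(m+1); and |C| ≤ C(L,w)^m/(1 + m·w·(L−w)) otherwise. -/
/-!
Generalized sphere packing. Codewords are at distance at least 6, so the radius-2 balls around
them are disjoint, and for any set `P` of words, `|C|` times a lower bound for
`|ball(c, 2) ∩ P|` is at most `|P|`. With `P` the words all of whose blocks have weight `w`, each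
ball contains `c` and the `m w (L - w)` words obtained by moving a single 1 inside one block: this
is the third bound. With `P` the words in which two blocks have weight `w - 1` and the others
weight `w`, each ball contains the `w²` words obtained by clearing a 1 in each of these two blocks:
this is the first bound (for `m < 2` fewer blocks are lowered, and the missing factors `w` are
absorbed by `w ≤ C(L, w - 1)`). The second bound is the first one for the complemented code, of
weight `L - w`.
-/

open Finset

/-- The Hamming weight of a length-`L` binary subblock. -/
def wt {L : ℕ} (b : Fin L → Bool) : ℕ :=
  (Finset.univ.filter (fun j => b j = true)).card

/-- Hamming distance between two binary words of length `mL`, given as `m`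
subblocks of length `L`. -/
def hdist {m L : ℕ} (x y : Fin m → Fin L → Bool) : ℕ :=
  ∑ i, hammingDist (x i) (y i)

open Function

section Block

variable {L : ℕ}

def blockSphere (b : Fin L → Bool) (d k : ℕ) : Finset (Fin L → Bool) :=
  {b' | hammingDist b b' = d ∧ wt b' = k}

lemma mem_blockSphere {b b' : Fin L → Bool} {d k : ℕ} :
    b' ∈ blockSphere b d k ↔ hammingDist b b' = d ∧ wt b' = k := by
  simp [blockSphere]

lemma self_mem_blockSphere (b : Fin L → Bool) : b ∈ blockSphere b 0 (wt b) := by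
  simp [blockSphere]

lemma card_filter_wt_eq (k : ℕ) : #{b : Fin L → Bool | wt b = k} = L.choose k := by
  rw [show L.choose k = #(powersetCard k (univ : Finset (Fin L))) by simp]
  refine card_nbij' (fun b => univ.filter (b · = true)) (fun s j => decide (j ∈ s))
    (fun b hb => mem_powersetCard.2 ⟨subset_univ _, (mem_filter.1 hb).2⟩)
    (fun s hs => mem_filter.2 ⟨mem_univ _, by simpa [wt] using (mem_powersetCard.1 hs).2⟩)
    (fun b _ => ?_) (fun s _ => ?_)
  · ext j; simp
  · ext j; simp

lemma card_filter_eq_false (b : Fin L → Bool) : #(univ.filter (b · = false)) = L - wt b := by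
  have := card_filter_add_card_filter_not (s := univ) (b · = true)
  simp only [Bool.not_eq_true, card_univ, Fintype.card_fin] at this
  rw [wt]; omega

lemma wt_update_false_add_one {b : Fin L → Bool} {p : Fin L} (h : b p = true) :
    wt (update b p false) + 1 = wt b := by
  have : univ.filter (update b p false · = true) = (univ.filter (b · = true)).erase p := by
    ext j; by_cases hj : j = p <;> simp [hj, update_of_ne]
  rw [wt, this, wt, card_erase_add_one (by simpa using h)]

lemma wt_update_true {b : Fin L → Bool} {p : Fin L} (h : b p = false) :
    wt (update b p true) = wt b + 1 := by
  have : univ.filter (update b p true · = true) = insert p (univ.filter (b · = true)) := by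
    ext j; by_cases hj : j = p <;> simp [hj, update_of_ne]
  rw [wt, this, wt, card_insert_of_notMem (by simp [h])]

lemma hammingDist_update_of_ne {b : Fin L → Bool} {p : Fin L} {v : Bool} (h : b p ≠ v) :
    hammingDist b (update b p v) = 1 := by
  have : univ.filter (fun j => b j ≠ update b p v j) = {p} := by
    ext j; by_cases hj : j = p <;> simp [hj, update_of_ne, h]
  rw [hammingDist, this, card_singleton]

lemma hammingDist_update_update {b : Fin L → Bool} {p q : Fin L} (hp : b p = true)
    (hq : b q = false) :
    hammingDist b (update (update b p false) q true) = 2 := by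
  have hpq : p ≠ q := by rintro rfl; simp_all
  have : univ.filter (fun j => b j ≠ update (update b p false) q true j) = {p, q} := by
    ext j
    by_cases hjq : j = q
    · subst hjq; simp [hq]
    · by_cases hjp : j = p
      · subst hjp; simp [hjq, hp]
      · simp [hjp, hjq]
  rw [hammingDist, this, card_pair hpq]

lemma wt_le_card_blockSphere_one (b : Fin L → Bool) :
    wt b ≤ #(blockSphere b 1 (wt b - 1)) := by
  refine card_le_card_of_injOn (fun p => update b p false) (fun p hp => ?_) fun p hp p' _ h => ?_
  · have hp : b p = true := by simpa using hp
    have := wt_update_false_add_one hp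
    dsimp only
    exact mem_blockSphere.2 ⟨hammingDist_update_of_ne (by simp [hp]), by omega⟩
  · by_contra hne
    simpa [update_of_ne hne, show b p = true by simpa using hp] using congrFun h p

lemma injOn_update_update (b : Fin L → Bool) :
    Set.InjOn (fun pq : Fin L × Fin L => update (update b pq.1 false) pq.2 true)
      ↑(univ.filter (b · = true) ×ˢ univ.filter (b · = false)) := by
  rintro ⟨p, q⟩ hpq ⟨p', q'⟩ hpq' h
  obtain ⟨hp, hq⟩ : b p = true ∧ b q = false := by simpa using hpq
  obtain ⟨hp', hq'⟩ : b p' = true ∧ b q' = false := by simpa using hpq'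
  have hpq : p ≠ q := by rintro rfl; simp_all
  have hpq' : p ≠ q' := by rintro rfl; simp_all
  have hqp' : q ≠ p' := by rintro rfl; simp_all
  have hpp' : p = p' := by
    by_contra hne
    simpa [update_of_ne hpq, update_of_ne hpq', update_of_ne hne, hp] using congrFun h p
  have hqq' : q = q' := by
    by_contra hne
    simpa [update_of_ne hne, update_of_ne hqp', hq] using congrFun h q
  rw [hpp', hqq']

lemma wt_mul_le_card_blockSphere_two (b : Fin L → Bool) :
    wt b * (L - wt b) ≤ #(blockSphere b 2 (wt b)) := by
  calc wt b * (L - wt b) = #(univ.filter (b · = true) ×ˢ univ.filter (b · = false)) := by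
        rw [card_product, card_filter_eq_false, wt]
    _ ≤ _ := by
      refine card_le_card_of_injOn _ (fun pq hpq => ?_) (injOn_update_update b)
      obtain ⟨hp, hq⟩ : b pq.1 = true ∧ b pq.2 = false := by simpa using hpq
      have hpq : pq.1 ≠ pq.2 := by rintro h; simp_all
      have := wt_update_true (b := update b pq.1 false) (p := pq.2) (by simp [hpq.symm, hq])
      have := wt_update_false_add_one hp
      exact mem_blockSphere.2 ⟨hammingDist_update_update hp hq, by omega⟩

end Block

section Word

variable {m L : ℕ}

lemma hdist_comm (x y : Fin m → Fin L → Bool) : hdist x y = hdist y x := by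
  simp only [hdist, hammingDist_comm]

lemma hdist_triangle (x y z : Fin m → Fin L → Bool) : hdist x z ≤ hdist x y + hdist y z := by
  rw [hdist, hdist, hdist, ← sum_add_distrib]
  exact sum_le_sum fun i _ => hammingDist_triangle _ _ _

lemma hdist_compl (x y : Fin m → Fin L → Bool) : hdist xᶜ yᶜ = hdist x y := by
  simp only [hdist, Pi.compl_apply]
  congr! 1 with i
  exact hammingDist_comp (fun _ => compl) fun _ => compl_injective

lemma wt_compl (b : Fin L → Bool) : wt bᶜ = L - wt b := by
  rw [← card_filter_eq_false]
  simp [wt]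

def weightProfile (W : Fin m → ℕ) : Finset (Fin m → Fin L → Bool) :=
  Fintype.piFinset fun i => {b | wt b = W i}

lemma card_weightProfile (W : Fin m → ℕ) :
    #(weightProfile (L := L) W) = ∏ i, L.choose (W i) := by
  simp [weightProfile, card_filter_wt_eq]

lemma card_mul_le_card_of_le_card_ball (r N : ℕ) (C P : Finset (Fin m → Fin L → Bool))
    (hmin : ∀ x ∈ C, ∀ y ∈ C, x ≠ y → 2 * r < hdist x y)
    (hball : ∀ c ∈ C, N ≤ #{z ∈ P | hdist c z ≤ r}) : #C * N ≤ #P := by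
  simpa using card_mul_le_card_mul (fun c z => hdist c z ≤ r) hball fun z _ =>
    card_le_one.2 fun x hx y hy => by
      by_contra hxy
      simp only [Finset.bipartiteBelow, mem_filter] at hx hy
      have := hdist_triangle x z y
      have := hmin x hx.1 y hy.1 hxy
      rw [hdist_comm z y] at *
      omega

lemma piFinset_blockSphere_subset (c : Fin m → Fin L → Bool) (d W : Fin m → ℕ) {r : ℕ}
    (hd : ∑ i, d i ≤ r) :
    Fintype.piFinset (fun i => blockSphere (c i) (d i) (W i))
      ⊆ {z ∈ weightProfile W | hdist c z ≤ r} := by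
  intro z hz
  simp only [Fintype.mem_piFinset, mem_blockSphere] at hz
  rw [mem_filter, weightProfile, Fintype.mem_piFinset, hdist]
  exact ⟨fun i => by simpa using (hz i).2, by simpa [hz] using hd⟩

end Word

section Balls

variable {m L w : ℕ}

lemma pow_card_le_card_ball_lowered (c : Fin m → Fin L → Bool) (hc : ∀ i, wt (c i) = w)
    (S : Finset (Fin m)) {r : ℕ} (hS : #S ≤ r) :
    w ^ #S ≤
      #{z ∈ weightProfile (fun i => if i ∈ S then w - 1 else w) | hdist c z ≤ r} := by
  calc w ^ #S = ∏ i, if i ∈ S then w else 1 := by rw [prod_ite_mem, univ_inter, prod_const]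
    _ ≤ ∏ i, #(blockSphere (c i) (if i ∈ S then 1 else 0)
          (if i ∈ S then w - 1 else w)) := by
      refine prod_le_prod' fun i _ => ?_
      split_ifs
      · exact hc i ▸ wt_le_card_blockSphere_one (c i)
      · exact card_pos.2 ⟨c i, hc i ▸ self_mem_blockSphere (c i)⟩
    _ ≤ _ := by
      rw [← Fintype.card_piFinset]
      exact card_le_card (piFinset_blockSphere_subset c _ _ (by simpa using hS))

lemma one_add_mul_le_card_ball_swap (c : Fin m → Fin L → Bool) (hc : ∀ i, wt (c i) = w) :
    1 + m * w * (L - w) ≤ #{z ∈ weightProfile (fun _ => w) | hdist c z ≤ 2} := by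
  set A : Fin m → Finset (Fin m → Fin L → Bool) := fun i =>
    Fintype.piFinset fun j => blockSphere (c j) (if j = i then 2 else 0) w
  have hA : ∀ i, w * (L - w) ≤ #(A i) := fun i => calc
    w * (L - w) = ∏ j, if j = i then w * (L - w) else 1 := by rw [prod_ite_eq']; simp
    _ ≤ #(A i) := by
      rw [Fintype.card_piFinset]
      refine prod_le_prod' fun j _ => ?_
      split_ifs
      · exact hc j ▸ wt_mul_le_card_blockSphere_two (c j)
      · exact card_pos.2 ⟨c j, hc j ▸ self_mem_blockSphere (c j)⟩
  have hdist_eq : ∀ i j, ∀ z ∈ A i, hammingDist (c j) (z j) = if j = i then 2 else 0 :=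
    fun i j z hz => (mem_blockSphere.1 (Fintype.mem_piFinset.1 hz j)).1
  have hcA : ∀ i, c ∉ A i := fun i hci => by simpa using hdist_eq i i c hci
  have hdisj : ((univ : Finset (Fin m)) : Set (Fin m)).PairwiseDisjoint A := fun i _ j _ hij =>
    disjoint_left.2 fun z hzi hzj => by
      have := hdist_eq i i z hzi
      have := hdist_eq j i z hzj
      simp_all
  calc 1 + m * w * (L - w) ≤ 1 + ∑ i, #(A i) := by
        rw [mul_assoc]
        simpa using sum_le_sum fun i (_ : i ∈ univ) => hA i
    _ = #(insert c (univ.biUnion A)) := by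
        rw [card_insert_of_notMem (by simpa using hcA), card_biUnion hdisj, add_comm]
    _ ≤ _ := by
        refine card_le_card (insert_subset ?_ (biUnion_subset.2 fun i _ => ?_))
        · simp [weightProfile, hdist, hc]
        · exact piFinset_blockSphere_subset c _ _ (by simp)

end Balls

section Bounds

variable {m L w : ℕ} {C : Finset (Fin m → Fin L → Bool)}

lemma card_mul_pow_card_le (hC : ∀ c ∈ C, ∀ i, wt (c i) = w) {r : ℕ}
    (hmin : ∀ x ∈ C, ∀ y ∈ C, x ≠ y → 2 * r < hdist x y) (S : Finset (Fin m))
    (hS : #S ≤ r) :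
    #C * w ^ #S ≤ L.choose (w - 1) ^ #S * L.choose w ^ (m - #S) := by
  have h := card_mul_le_card_of_le_card_ball r _ C _ hmin fun c hc =>
    pow_card_le_card_ball_lowered c (hC c hc) S hS
  rw [card_weightProfile, prod_apply_ite, prod_const, prod_const] at h
  simpa [filter_mem_eq_inter, filter_not, card_sdiff] using h

lemma card_mul_sq_le_choose_sub_one (hw : 1 ≤ w) (hwL : w ≤ L)
    (hC : ∀ c ∈ C, ∀ i, wt (c i) = w)
    (hmin : ∀ x ∈ C, ∀ y ∈ C, x ≠ y → 2 * 2 < hdist x y) :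
    #C * w ^ 2 ≤ L.choose (w - 1) ^ 2 * L.choose w ^ (m - 2) := by
  obtain ⟨S, -, hS⟩ := exists_subset_card_eq (show min m 2 ≤ #(univ : Finset (Fin m)) by simp)
  have h := card_mul_pow_card_le hC hmin S (hS ▸ min_le_right m 2)
  have hwB : w ≤ L.choose (w - 1) := by
    obtain ⟨k, rfl⟩ : ∃ k, w = k + 1 := ⟨w - 1, by omega⟩
    simpa using Nat.choose_le_choose k hwL
  rw [hS, show m - min m 2 = m - 2 by omega] at h
  have hsplit : ∀ a : ℕ, a ^ 2 = a ^ min m 2 * a ^ (2 - min m 2) := fun a => by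
    rw [← pow_add, Nat.add_sub_cancel' (min_le_right m 2)]
  calc #C * w ^ 2 = #C * w ^ min m 2 * w ^ (2 - min m 2) := by rw [hsplit, mul_assoc]
    _ ≤ L.choose (w - 1) ^ min m 2 * L.choose w ^ (m - 2) *
          L.choose (w - 1) ^ (2 - min m 2) := by gcongr
    _ = _ := by rw [hsplit (L.choose (w - 1))]; ring

lemma card_mul_sq_le_choose_add_one (hwL : w + 1 ≤ L) (hC : ∀ c ∈ C, ∀ i, wt (c i) = w)
    (hmin : ∀ x ∈ C, ∀ y ∈ C, x ≠ y → 2 * 2 < hdist x y) :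
    #C * (L - w) ^ 2 ≤ L.choose (w + 1) ^ 2 * L.choose w ^ (m - 2) := by
  have h := card_mul_sq_le_choose_sub_one (C := C.map ⟨compl, compl_injective⟩) (w := L - w)
    (by omega) (by omega) (by simp +contextual [wt_compl, hC]) (by simpa [hdist_compl] using hmin)
  rwa [card_map, show L - w - 1 = L - (w + 1) by omega, Nat.choose_symm (by omega),
    Nat.choose_symm (by omega)] at h

lemma card_mul_one_add_le_choose_pow (hC : ∀ c ∈ C, ∀ i, wt (c i) = w)
    (hmin : ∀ x ∈ C, ∀ y ∈ C, x ≠ y → 2 * 2 < hdist x y) :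
    #C * (1 + m * w * (L - w)) ≤ L.choose w ^ m := by
  simpa [card_weightProfile] using card_mul_le_card_of_le_card_ball 2 _ C _ hmin fun c hc =>
    one_add_mul_le_card_ball_swap c (hC c hc)

end Bounds

/-- Corollary 8(ii): generalized sphere-packing bound for double-error
correcting constant subblock-composition codes. -/
theorem stmt_11 (m L w : ℕ) (hw1 : 2 ≤ w) (hw2 : w ≤ L - 2)
    (C : Finset (Fin m → Fin L → Bool))
    (hC : ∀ c ∈ C, ∀ i, wt (c i) = w)
    (hmin : ∀ x ∈ C, ∀ y ∈ C, x ≠ y → 6 ≤ hdist x y) :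
    ((w : ℚ) ≤ ((L : ℚ) + 2) / ((m : ℚ) + 1) →
      (C.card : ℚ) ≤
        ((Nat.choose L (w - 1) : ℚ) ^ 2 * (Nat.choose L w : ℚ) ^ (m - 2)) / (w : ℚ) ^ 2) ∧
    (((m : ℚ) * (L : ℚ) - 2) / ((m : ℚ) + 1) ≤ (w : ℚ) →
      (C.card : ℚ) ≤
        ((Nat.choose L (w + 1) : ℚ) ^ 2 * (Nat.choose L w : ℚ) ^ (m - 2)) /
          ((L - w : ℕ) : ℚ) ^ 2) ∧
    (((L : ℚ) + 2) / ((m : ℚ) + 1) < (w : ℚ) ∧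
        (w : ℚ) < ((m : ℚ) * (L : ℚ) - 2) / ((m : ℚ) + 1) →
      (C.card : ℚ) ≤
        (Nat.choose L w : ℚ) ^ m / (1 + (m : ℚ) * (w : ℚ) * ((L - w : ℕ) : ℚ))) := by
  have hmin' : ∀ x ∈ C, ∀ y ∈ C, x ≠ y → 2 * 2 < hdist x y := fun x hx y hy hxy =>
    lt_of_lt_of_le (by norm_num) (hmin x hx y hy hxy)
  have hw : (0 : ℚ) < w := by exact_mod_cast (by omega : 0 < w)
  have hLw : (0 : ℚ) < (L - w : ℕ) := by exact_mod_cast (by omega : 0 < L - w)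
  refine ⟨fun _ => ?_, fun _ => ?_, fun _ => ?_⟩
  · rw [le_div_iff₀ (by positivity)]
    exact_mod_cast card_mul_sq_le_choose_sub_one (by omega) (by omega) hC hmin'
  · rw [le_div_iff₀ (by positivity)]
    exact_mod_cast card_mul_sq_le_choose_add_one (by omega) hC hmin'
  · rw [le_div_iff₀ (by positivity)]
    exact_mod_cast card_mul_one_add_le_choose_pow hC hmin'
end
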